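/- Let K ≥ 2 and 1 ≤ M ≤ K, and let the normalized channel gains satisfy 0 < H₁ ≤ … ≤ H_{M−1} ≤ H_e < H_M ≤ … ≤ H_K. Let A₁, …, A_K ≥ 1, α > 0, P_c ≥ 0, and P_max ≥ P_min, where P_min = Σ_{k=1}^K (A_k − 1)/H_k · ∏_{j=1}^{k−1} A_j. For p ∈ ℝ₊^K let θ_k(p) = Σ_{i=k}^K p_i (with θ_{K+1}(p) = 0), and define the objective Ψ(p) = Σ_{k=M}^K [ (1/2)·log₂(1 + H_k·p_k/(H_k·θ_{k+1}(p) + 1)) − (1/2)·log₂(1 + H_e·p_k/(H_e·θ_{k+1}(p) + 1)) ] − α·(θ₁(p) + P_c), and the feasible set Π = {p ∈ ℝ₊^K : θ₁(p) ≤ P_max and θ_k(p) ≥ A_k·θ_{k+1}(p) + (A_k − 1)/H_k for all k}. For t ≥ 0 define the power vector p(t) ∈ ℝ^K by p_K(t) = t and, recursively for k = K−1 down to 1, p_k(t) = (A_k − 1)·(1/H_k + θ_{k+1}(p(t))); equivalently p_k(t) = (A_k − 1)·(1/H_k + t·∏_{i=k+1}^{K−1} A_i + Σ_{i=k+1}^{K−1}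 (A_i − 1)/H_i · ∏_{j=k+1}^{i−1} A_j). Let u = (P_max − P_min + (A_K − 1)/H_K · ∏_{j=1}^{K−1} A_j)/∏_{j=1}^{K−1} A_j. Then for every t ∈ [(A_K − 1)/H_K, u] the vector p(t) lies in Π, and the maximum of Ψ over Π is attained and equals the maximum of t ↦ Ψ(p(t)) over the interval [(A_K − 1)/H_K, u]. -/

import Mathlib

/-!
Write `θ_k = Σ_{i ≥ k} p_i`. User `k`'s secrecy rate is `r_k(θ_k) - r_k(θ_{k+1})` with
`r_k(x) = ½ log₂ ((1 + H_k x) / (1 + H_e x))`, and summation by parts turns `Ψ` into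
`r_M(θ_M) + Σ_{k > M} ½ log₂ ((1 + H_k θ_k) / (1 + H_{k-1} θ_k)) - α (θ_1 + P_c)`,
which is nondecreasing in every `θ_k` with `k ≥ M` because the gains are sorted.
Given a feasible `p`, pick `t` with `θ_1(p(t)) = θ_1(p)`. The QoS constraints read
`θ_{k+1} ≤ (θ_k - (A_k - 1)/H_k) / A_k`, with equality along `p(t)`, so by induction on `k`
every tail sum of `p` is at most that of `p(t)`, whence `Ψ p ≤ Ψ (p t)`. The maximum of the
continuous function `t ↦ Ψ (p t)` on the compact interval is therefore the maximum over `Π`.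
-/

open Finset in
/-- The candidate power allocation of Theorem 1: the strongest user K gets power t,
and every weaker user k < K gets the closed-form power
p_k(t) = (A_k − 1)·(1/H_k + t·∏_{i=k+1}^{K−1} A_i
         + Σ_{i=k+1}^{K−1} (A_i − 1)/H_i · ∏_{j=k+1}^{i−1} A_j). -/
noncomputable def powerAlloc (K : ℕ) (H A : ℕ → ℝ) (t : ℝ) : ℕ → ℝ :=
  fun k => if k = K then t else
    (A k - 1) * (1 / H k + t * ∏ i ∈ Icc (k+1) (K-1), A i
      + ∑ i ∈ Icc (k+1) (K-1), (A i - 1) / H i * ∏ j ∈ Icc (k+1) (i-1), A j)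

open Finset Real

theorem Finset.sum_Icc_sub_succ_eq_add_sum_Icc_sub_pred {α G : Type*} [AddCommGroup G]
    (f : ℕ → α → G) (x : ℕ → α) {M K : ℕ} (hMK : M ≤ K) :
    ∑ k ∈ Icc M K, (f k (x k) - f k (x (k + 1))) =
      f M (x M) - f K (x (K + 1)) + ∑ k ∈ Icc (M + 1) K, (f k (x k) - f (k - 1) (x k)) := by
  induction K, hMK using Nat.le_induction with
  | base => simp
  | succ n hn ih =>
    rw [sum_Icc_succ_top (by omega), sum_Icc_succ_top (by omega), ih, Nat.add_sub_cancel]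
    abel

theorem isGreatest_image_of_forall_le_comp {α β γ : Type*} [Preorder γ] {f : α → γ}
    {g : β → α} {s : Set α} {t : Set β} {b : β} (hg : Set.MapsTo g t s)
    (hdom : ∀ a ∈ s, ∃ c ∈ t, f a ≤ f (g c)) (hb : b ∈ t) (hmax : IsMaxOn (f ∘ g) t b) :
    IsGreatest (f '' s) (f (g b)) ∧ IsGreatest ((f ∘ g) '' t) (f (g b)) := by
  refine ⟨⟨⟨g b, hg hb, rfl⟩, ?_⟩, ⟨⟨b, hb, rfl⟩, ?_⟩⟩
  · rintro _ ⟨a, ha, rfl⟩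
    obtain ⟨c, hc, hac⟩ := hdom a ha
    exact hac.trans (hmax hc)
  · rintro _ ⟨c, hc, rfl⟩
    exact hmax hc

theorem supersolution_le_solution_of_le_first {K : ℕ} {a b x y : ℕ → ℝ}
    (ha : ∀ k ∈ Ico 1 K, 0 < a k) (hx : ∀ k ∈ Ico 1 K, a k * x (k + 1) + b k ≤ x k)
    (hy : ∀ k ∈ Ico 1 K, y k = a k * y (k + 1) + b k) (h1 : x 1 ≤ y 1) :
    ∀ k ∈ Icc 1 K, x k ≤ y k := by
  intro k hk
  obtain ⟨hk1, hkK⟩ := mem_Icc.1 hk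
  induction k, hk1 using Nat.le_induction with
  | base => exact h1
  | succ n hn ih =>
    have hn' : n ∈ Ico 1 K := mem_Ico.2 ⟨hn, hkK⟩
    refine le_of_mul_le_mul_left ?_ (ha n hn')
    linarith [hx n hn', hy n hn', ih (mem_Icc.2 ⟨hn, by omega⟩) (by omega)]

theorem solution_le_supersolution_of_le_last {K : ℕ} {a b x y : ℕ → ℝ}
    (ha : ∀ k ∈ Ico 1 K, 0 ≤ a k) (hx : ∀ k ∈ Ico 1 K, a k * x (k + 1) + b k ≤ x k)
    (hy : ∀ k ∈ Ico 1 K, y k = a k * y (k + 1) + b k) (hK : y K ≤ x K) :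
    ∀ k ∈ Icc 1 K, y k ≤ x k := by
  intro k hk
  obtain ⟨hk1, hkK⟩ := mem_Icc.1 hk
  induction hkK using Nat.decreasingInduction with
  | self => exact hK
  | of_succ n hn ih =>
    have hn' : n ∈ Ico 1 K := mem_Ico.2 ⟨hk1, hn⟩
    rw [hy n hn']
    nlinarith [hx n hn', ih (mem_Icc.2 ⟨by omega, hn⟩) (by omega), ha n hn']

noncomputable def rate (h x : ℝ) : ℝ := 1 / 2 * logb 2 (1 + h * x)

@[simp]
theorem rate_zero (h : ℝ) : rate h 0 = 0 := by simp [rate]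

theorem rate_add_sub_rate {h x y : ℝ} (hh : 0 ≤ h) (hx : 0 ≤ x) (hy : 0 ≤ y) :
    rate h (x + y) - rate h y = 1 / 2 * logb 2 (1 + h * x / (h * y + 1)) := by
  have hy1 : 0 < 1 + h * y := by positivity
  have hxy1 : 0 < 1 + h * (x + y) := by positivity
  have heq : 1 + h * x / (h * y + 1) = (1 + h * (x + y)) / (1 + h * y) := by
    field_simp
    ring
  rw [rate, rate, heq, logb_div hxy1.ne' hy1.ne']
  ring

theorem monotoneOn_rate_sub_rate {a b : ℝ} (ha : 0 ≤ a) (hab : a ≤ b) :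
    MonotoneOn (fun x => rate b x - rate a x) (Set.Ici 0) := by
  intro x (hx : 0 ≤ x) y (hy : 0 ≤ y) hxy
  have hax : 0 < 1 + a * x := by positivity
  have hay : 0 < 1 + a * y := by positivity
  have hbx : 0 < 1 + b * x := by nlinarith
  have hby : 0 < 1 + b * y := by nlinarith
  simp only [rate, ← mul_sub, ← logb_div hbx.ne' hax.ne', ← logb_div hby.ne' hay.ne']
  refine mul_le_mul_of_nonneg_left (logb_le_logb_of_le one_lt_two (by positivity) ?_) (by norm_num)
  rw [div_le_div_iff₀ hax hay]
  nlinarith [mul_nonneg (sub_nonneg.2 hab) (sub_nonneg.2 hxy)]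

theorem continuousOn_rate {h : ℝ} (hh : 0 ≤ h) : ContinuousOn (rate h) (Set.Ici 0) := by
  refine continuousOn_const.mul (ContinuousOn.logb (by fun_prop) fun x (hx : 0 ≤ x) => ?_)
  positivity

def tailSum (K : ℕ) (p : ℕ → ℝ) (k : ℕ) : ℝ := ∑ i ∈ Icc k K, p i

theorem tailSum_eq_add (K : ℕ) (p : ℕ → ℝ) {k : ℕ} (hk : k ≤ K) :
    tailSum K p k = p k + tailSum K p (k + 1) := by
  rw [tailSum, ← insert_Icc_add_one_left_eq_Icc hk, sum_insert (by simp), tailSum]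

theorem tailSum_nonneg {K : ℕ} {p : ℕ → ℝ} {M : ℕ} (hp : ∀ i ∈ Icc M K, 0 ≤ p i) {k : ℕ}
    (hk : M ≤ k) : 0 ≤ tailSum K p k :=
  sum_nonneg fun i hi => hp i (mem_Icc.2 ⟨hk.trans (mem_Icc.1 hi).1, (mem_Icc.1 hi).2⟩)

section Objective

variable (K M : ℕ) (H : ℕ → ℝ) (He α Pc : ℝ)

noncomputable def secrecyObjective (p : ℕ → ℝ) : ℝ :=
  (∑ k ∈ Icc M K,
    ((1/2) * logb 2 (1 + H k * p k / (H k * tailSum K p (k+1) + 1)) -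
     (1/2) * logb 2 (1 + He * p k / (He * tailSum K p (k+1) + 1))))
  - α * (tailSum K p 1 + Pc)

/-- `Ψ` after summation by parts, in terms of the tail sums `x k = θ_k(p)`. -/
noncomputable def telescopedObjective (x : ℕ → ℝ) : ℝ :=
  (rate (H M) (x M) - rate He (x M))
    + ∑ k ∈ Icc (M + 1) K, (rate (H k) (x k) - rate (H (k - 1)) (x k))
    - α * (x 1 + Pc)

variable {K M H He}

theorem secrecyObjective_eq_telescopedObjective (hMK : M ≤ K) (hH : ∀ k ∈ Icc M K, 0 ≤ H k)
    (hHe : 0 ≤ He) {p : ℕ → ℝ} (hp : ∀ i ∈ Icc M K, 0 ≤ p i) :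
    secrecyObjective K M H He α Pc p = telescopedObjective K M H He α Pc (tailSum K p) := by
  set F : ℕ → ℝ → ℝ := fun k x => rate (H k) x - rate He x
  have hterm : ∀ k ∈ Icc M K,
      (1/2) * logb 2 (1 + H k * p k / (H k * tailSum K p (k+1) + 1)) -
        (1/2) * logb 2 (1 + He * p k / (He * tailSum K p (k+1) + 1)) =
      F k (tailSum K p k) - F k (tailSum K p (k + 1)) := by
    intro k hk
    obtain ⟨hMk, hkK⟩ := mem_Icc.1 hk
    have hθ := tailSum_nonneg hp (hMk.trans k.le_succ)
    rw [tailSum_eq_add K p hkK, ← rate_add_sub_rate (hH k hk) (hp k hk) hθ,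
      ← rate_add_sub_rate hHe (hp k hk) hθ]
    ring
  have hlast : tailSum K p (K + 1) = 0 := by simp [tailSum]
  rw [secrecyObjective, sum_congr rfl hterm, sum_Icc_sub_succ_eq_add_sum_Icc_sub_pred F _ hMK,
    hlast, telescopedObjective]
  simp only [F, rate_zero, sub_self, sub_zero, sub_sub_sub_cancel_right]

theorem telescopedObjective_le (hMK : M ≤ K) (hHe : 0 ≤ He) (hHeM : He ≤ H M)
    (hH : MonotoneOn H (Set.Icc M K))
    {x y : ℕ → ℝ} (hx : ∀ k ∈ Icc M K, 0 ≤ x k) (hxy : ∀ k ∈ Icc M K, x k ≤ y k)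
    (h1 : x 1 = y 1) :
    telescopedObjective K M H He α Pc x ≤ telescopedObjective K M H He α Pc y := by
  have hmono : ∀ {a b : ℝ} {k : ℕ}, 0 ≤ a → a ≤ b → k ∈ Icc M K →
      rate b (x k) - rate a (x k) ≤ rate b (y k) - rate a (y k) := fun ha hab hk =>
    monotoneOn_rate_sub_rate ha hab (hx _ hk) (hx _ hk |>.trans (hxy _ hk)) (hxy _ hk)
  unfold telescopedObjective
  rw [h1]
  gcongr ?_ + ?_ - _
  · exact hmono hHe hHeM (mem_Icc.2 ⟨le_rfl, hMK⟩)
  · refine sum_le_sum fun k hk => ?_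
    obtain ⟨hk1, hkK⟩ := mem_Icc.1 hk
    have hMk : H M ≤ H (k - 1) := hH ⟨le_rfl, hMK⟩ ⟨by omega, by omega⟩ (by omega)
    have hkk : H (k - 1) ≤ H k := hH ⟨by omega, by omega⟩ ⟨by omega, hkK⟩ (by omega)
    exact hmono (hHe.trans (hHeM.trans hMk)) hkk (mem_Icc.2 ⟨by omega, hkK⟩)

theorem continuousOn_telescopedObjective (hMK : M ≤ K) (hH : ∀ k ∈ Icc M K, 0 ≤ H k)
    (hHe : 0 ≤ He) :
    ContinuousOn (telescopedObjective K M H He α Pc) {x | ∀ k ∈ Icc M K, 0 ≤ x k} := by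
  have hrate : ∀ {h : ℝ} {k : ℕ}, 0 ≤ h → k ∈ Icc M K →
      ContinuousOn (fun x : ℕ → ℝ => rate h (x k)) {x | ∀ k ∈ Icc M K, 0 ≤ x k} :=
    fun hh hk => (continuousOn_rate hh).comp (continuous_apply _).continuousOn fun x hx => hx _ hk
  have hM : M ∈ Icc M K := mem_Icc.2 ⟨le_rfl, hMK⟩
  refine (((hrate (hH M hM) hM).sub (hrate hHe hM)).add
    (continuousOn_finsetSum _ fun k hk => ?_)).sub
      (continuousOn_const.mul ((continuous_apply 1).continuousOn.add continuousOn_const))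
  obtain ⟨hk1, hkK⟩ := mem_Icc.1 hk
  have hpred : k - 1 ∈ Icc M K := mem_Icc.2 ⟨by omega, by omega⟩
  have hk' : k ∈ Icc M K := mem_Icc.2 ⟨by omega, hkK⟩
  exact (hrate (hH k hk') hk').sub (hrate (hH _ hpred) hk')

end Objective

/-- `θ_k(p(t))` for the allocation `p(t) = powerAlloc K H A t`, in closed form. -/
noncomputable def tailPower (K : ℕ) (H A : ℕ → ℝ) (t : ℝ) (k : ℕ) : ℝ :=
  t * ∏ i ∈ Icc k (K - 1), A i + ∑ i ∈ Icc k (K - 1), (A i - 1) / H i * ∏ j ∈ Icc k (i - 1), A j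

/-- `P_min`, the least total power compatible with the QoS constraints. -/
noncomputable def minPower (K : ℕ) (H A : ℕ → ℝ) : ℝ :=
  ∑ k ∈ Icc 1 K, (A k - 1) / H k * ∏ j ∈ Icc 1 (k - 1), A j

/-- The largest power `u` of the strongest user within the budget: `tailPower K H A u 1 = Pmax`.
-/
noncomputable def maxStrongPower (K : ℕ) (H A : ℕ → ℝ) (Pmax : ℝ) : ℝ :=
  (Pmax - minPower K H A + (A K - 1) / H K * ∏ j ∈ Icc 1 (K - 1), A j) /
    ∏ j ∈ Icc 1 (K - 1), A j

def feasibleSet (K : ℕ) (H A : ℕ → ℝ) (Pmax : ℝ) : Set (ℕ → ℝ) :=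
  {p | (∀ i ∈ Icc 1 K, 0 ≤ p i) ∧ tailSum K p 1 ≤ Pmax ∧
    ∀ k ∈ Icc 1 K, tailSum K p k ≥ A k * tailSum K p (k + 1) + (A k - 1) / H k}

section PowerAlloc

variable {K : ℕ} {H A : ℕ → ℝ} {t : ℝ}

theorem tailPower_self (hK : 1 ≤ K) : tailPower K H A t K = t := by
  simp [tailPower, Icc_eq_empty (show ¬K ≤ K - 1 by omega)]

theorem tailPower_eq {k : ℕ} (hk : k ∈ Ico 1 K) :
    tailPower K H A t k = A k * tailPower K H A t (k + 1) + (A k - 1) / H k := by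
  obtain ⟨hk1, hkK⟩ := mem_Ico.1 hk
  have hshift : ∀ i ∈ Icc (k + 1) (K - 1), (A i - 1) / H i * ∏ j ∈ Icc k (i - 1), A j =
      A k * ((A i - 1) / H i * ∏ j ∈ Icc (k + 1) (i - 1), A j) := by
    intro i hi
    rw [← insert_Icc_add_one_left_eq_Icc (show k ≤ i - 1 by grind), prod_insert (by simp)]
    ring
  rw [tailPower, tailPower, ← insert_Icc_add_one_left_eq_Icc (show k ≤ K - 1 by omega),
    prod_insert (by simp), sum_insert (by simp), sum_congr rfl hshift, ← mul_sum,
    Icc_eq_empty (show ¬k ≤ k - 1 by omega), prod_empty]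
  ring

theorem powerAlloc_of_ne {k : ℕ} (hk : k ≠ K) :
    powerAlloc K H A t k = (A k - 1) * (1 / H k + tailPower K H A t (k + 1)) := by
  simp only [powerAlloc, if_neg hk, tailPower, add_assoc]

theorem tailSum_powerAlloc {k : ℕ} (hk : k ∈ Icc 1 K) :
    tailSum K (powerAlloc K H A t) k = tailPower K H A t k := by
  rw [mem_Icc] at hk
  obtain ⟨hk1, hkK⟩ := hk
  induction hkK using Nat.decreasingInduction with
  | self => simp [tailSum, powerAlloc, tailPower_self hk1]
  | of_succ k hkK ih =>
    rw [tailSum_eq_add _ _ hkK.le, ih (by omega), powerAlloc_of_ne hkK.ne,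
      tailPower_eq (mem_Ico.2 ⟨hk1, hkK⟩)]
    ring

theorem tailPower_nonneg (hH : ∀ i ∈ Icc 1 K, 0 ≤ H i) (hA : ∀ i ∈ Icc 1 K, 1 ≤ A i)
    (ht : 0 ≤ t) {k : ℕ} (hk : 1 ≤ k) : 0 ≤ tailPower K H A t k := by
  have hA0 : ∀ i ∈ Icc k (K - 1), 0 ≤ A i - 1 := fun i hi =>
    sub_nonneg.2 (hA i (mem_Icc.2 ⟨by grind, by grind⟩))
  refine add_nonneg (mul_nonneg ht (prod_nonneg fun i hi => by linarith [hA0 i hi]))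
    (sum_nonneg fun i hi => mul_nonneg (div_nonneg (hA0 i hi) (hH i ?_)) (prod_nonneg ?_))
  · grind
  · intro j hj
    linarith [hA0 j (mem_Icc.2 ⟨by grind, by grind⟩)]

theorem powerAlloc_nonneg (hH : ∀ i ∈ Icc 1 K, 0 ≤ H i) (hA : ∀ i ∈ Icc 1 K, 1 ≤ A i)
    (ht : 0 ≤ t) : ∀ i ∈ Icc 1 K, 0 ≤ powerAlloc K H A t i := by
  intro i hi
  by_cases hiK : i = K
  · simpa [powerAlloc, hiK] using ht
  · rw [powerAlloc_of_ne hiK]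
    have := hH i hi
    exact mul_nonneg (sub_nonneg.2 (hA i hi))
      (add_nonneg (by positivity) (tailPower_nonneg hH hA ht (by omega)))

theorem continuous_powerAlloc (i : ℕ) : Continuous fun t => powerAlloc K H A t i := by
  unfold powerAlloc
  split_ifs <;> fun_prop

theorem tailPower_one (hK : 1 ≤ K) :
    tailPower K H A t 1 =
      minPower K H A + (t - (A K - 1) / H K) * ∏ j ∈ Icc 1 (K - 1), A j := by
  rw [minPower, ← insert_Icc_sub_one_right_eq_Icc hK, sum_insert (by simp; omega), tailPower]
  ring

theorem prod_Icc_one_pred_pos (hA : ∀ i ∈ Icc 1 K, 1 ≤ A i) : 0 < ∏ j ∈ Icc 1 (K - 1), A j :=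
  prod_pos fun j hj => one_pos.trans_le (hA j (Icc_subset_Icc le_rfl (Nat.sub_le K 1) hj))

theorem tailPower_one_le_iff (hK : 1 ≤ K) (hA : ∀ i ∈ Icc 1 K, 1 ≤ A i) {Pmax : ℝ} :
    tailPower K H A t 1 ≤ Pmax ↔ t ≤ maxStrongPower K H A Pmax := by
  rw [tailPower_one hK, maxStrongPower, le_div_iff₀ (prod_Icc_one_pred_pos hA)]
  constructor <;> intro h <;> linarith

end PowerAlloc

section Reduction

variable {K M : ℕ} {H A : ℕ → ℝ} {He α Pc Pmax : ℝ}

theorem powerAlloc_mem_feasibleSet (hK : 1 ≤ K) (hH : ∀ k ∈ Icc 1 K, 0 ≤ H k)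
    (hA : ∀ k ∈ Icc 1 K, 1 ≤ A k) {t : ℝ} (ht : (A K - 1) / H K ≤ t)
    (hbudget : tailPower K H A t 1 ≤ Pmax) : powerAlloc K H A t ∈ feasibleSet K H A Pmax := by
  have hKK : K ∈ Icc 1 K := mem_Icc.2 ⟨hK, le_rfl⟩
  have ht0 : 0 ≤ t := (div_nonneg (sub_nonneg.2 (hA K hKK)) (hH K hKK)).trans ht
  refine ⟨powerAlloc_nonneg hH hA ht0, by rwa [tailSum_powerAlloc (mem_Icc.2 ⟨le_rfl, hK⟩)],
    fun k hk => ?_⟩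
  obtain ⟨hk1, hkK⟩ := mem_Icc.1 hk
  rw [tailSum_powerAlloc hk]
  rcases hkK.lt_or_eq with hkK | rfl
  · rw [tailSum_powerAlloc (mem_Icc.2 ⟨by omega, hkK⟩), tailPower_eq (mem_Ico.2 ⟨hk1, hkK⟩)]
  · simpa [tailSum, tailPower_self hK] using ht

theorem minPower_le_tailSum (hK : 1 ≤ K) (hA : ∀ k ∈ Icc 1 K, 1 ≤ A k) {p : ℕ → ℝ}
    (hqos : ∀ k ∈ Icc 1 K, A k * tailSum K p (k + 1) + (A k - 1) / H k ≤ tailSum K p k) :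
    minPower K H A ≤ tailSum K p 1 := by
  have hlast : tailPower K H A ((A K - 1) / H K) K ≤ tailSum K p K := by
    simpa [tailPower_self hK, tailSum] using hqos K (mem_Icc.2 ⟨hK, le_rfl⟩)
  have := solution_le_supersolution_of_le_last
    (fun k hk => by linarith [hA k (Ico_subset_Icc_self hk)])
    (fun k hk => hqos k (Ico_subset_Icc_self hk)) (fun k hk => tailPower_eq hk) hlast 1
    (mem_Icc.2 ⟨le_rfl, hK⟩)
  rwa [tailPower_one hK, sub_self, zero_mul, add_zero] at this

theorem tailSum_le_tailPower (hA : ∀ k ∈ Icc 1 K, 1 ≤ A k) {p : ℕ → ℝ}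
    (hqos : ∀ k ∈ Icc 1 K, A k * tailSum K p (k + 1) + (A k - 1) / H k ≤ tailSum K p k)
    {t : ℝ} (h1 : tailSum K p 1 = tailPower K H A t 1) :
    ∀ k ∈ Icc 1 K, tailSum K p k ≤ tailPower K H A t k :=
  supersolution_le_solution_of_le_first (fun k hk => by linarith [hA k (Ico_subset_Icc_self hk)])
    (fun k hk => hqos k (Ico_subset_Icc_self hk)) (fun k hk => tailPower_eq hk) h1.le

theorem continuousOn_secrecyObjective_powerAlloc (hM1 : 1 ≤ M) (hMK : M ≤ K)
    (hH : ∀ k ∈ Icc 1 K, 0 ≤ H k) (hHe : 0 ≤ He) (hA : ∀ k ∈ Icc 1 K, 1 ≤ A k) :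
    ContinuousOn (fun t => secrecyObjective K M H He α Pc (powerAlloc K H A t)) (Set.Ici 0) := by
  have hsub : Icc M K ⊆ Icc 1 K := Icc_subset_Icc hM1 le_rfl
  have hnonneg : ∀ t ∈ Set.Ici (0 : ℝ), ∀ i ∈ Icc M K, 0 ≤ powerAlloc K H A t i :=
    fun t ht i hi => powerAlloc_nonneg hH hA ht i (hsub hi)
  have hθ : Continuous fun t => tailSum K (powerAlloc K H A t) :=
    continuous_pi fun k => continuous_finsetSum _ fun i _ => continuous_powerAlloc i
  refine ((continuousOn_telescopedObjective α Pc hMK (fun k hk => hH k (hsub hk)) hHe).comp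
    hθ.continuousOn fun t ht k hk => tailSum_nonneg (hnonneg t ht) (mem_Icc.1 hk).1).congr
    fun t ht => ?_
  exact secrecyObjective_eq_telescopedObjective α Pc hMK (fun k hk => hH k (hsub hk)) hHe
    (hnonneg t ht)

theorem exists_secrecyObjective_le_powerAlloc (hM1 : 1 ≤ M) (hMK : M ≤ K)
    (hH : ∀ k ∈ Icc 1 K, 0 ≤ H k) (hHmono : MonotoneOn H (Set.Icc 1 K)) (hHe : 0 ≤ He)
    (hHeM : He ≤ H M) (hA : ∀ k ∈ Icc 1 K, 1 ≤ A k) {p : ℕ → ℝ}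
    (hp : p ∈ feasibleSet K H A Pmax) :
    ∃ t ∈ Set.Icc ((A K - 1) / H K) (maxStrongPower K H A Pmax),
      secrecyObjective K M H He α Pc p ≤ secrecyObjective K M H He α Pc (powerAlloc K H A t) := by
  obtain ⟨hp0, hbudget, hqos⟩ := hp
  have hK : 1 ≤ K := hM1.trans hMK
  have hsub : Icc M K ⊆ Icc 1 K := Icc_subset_Icc hM1 le_rfl
  have hHMK : ∀ k ∈ Icc M K, 0 ≤ H k := fun k hk => hH k (hsub hk)
  have hP := prod_Icc_one_pred_pos hA
  set t := (A K - 1) / H K + (tailSum K p 1 - minPower K H A) / ∏ j ∈ Icc 1 (K - 1), A j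
    with ht_def
  have hct : (A K - 1) / H K ≤ t :=
    le_add_of_nonneg_right (div_nonneg (sub_nonneg.2 (minPower_le_tailSum hK hA hqos)) hP.le)
  have ht : tailPower K H A t 1 = tailSum K p 1 := by
    rw [tailPower_one hK, ht_def, add_sub_cancel_left, div_mul_cancel₀ _ hP.ne']
    ring
  have hθ : ∀ k ∈ Icc 1 K, tailSum K (powerAlloc K H A t) k = tailPower K H A t k :=
    fun k hk => tailSum_powerAlloc hk
  refine ⟨t, ⟨hct, (tailPower_one_le_iff hK hA).1 (ht ▸ hbudget)⟩, ?_⟩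
  have hKK : K ∈ Icc 1 K := mem_Icc.2 ⟨hK, le_rfl⟩
  have ht0 : 0 ≤ t := (div_nonneg (sub_nonneg.2 (hA K hKK)) (hH K hKK)).trans hct
  rw [secrecyObjective_eq_telescopedObjective α Pc hMK hHMK hHe fun i hi => hp0 i (hsub hi),
    secrecyObjective_eq_telescopedObjective α Pc hMK hHMK hHe
      fun i hi => powerAlloc_nonneg hH hA ht0 i (hsub hi)]
  refine telescopedObjective_le α Pc hMK hHe hHeM (hHmono.mono (Set.Icc_subset_Icc hM1 le_rfl))
    (fun k hk => tailSum_nonneg (fun i hi => hp0 i (hsub hi)) (mem_Icc.1 hk).1)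
    (fun k hk => ?_) ?_
  · rw [hθ k (hsub hk)]
    exact tailSum_le_tailPower hA hqos ht.symm k (hsub hk)
  · rw [hθ 1 (mem_Icc.2 ⟨le_rfl, hK⟩), ht]

end Reduction

open Finset in
theorem see_multiuser_reduction_to_one_dimension_general
    (K M : ℕ) (hM1 : 1 ≤ M) (hMK : M ≤ K)
    (H : ℕ → ℝ) (He : ℝ) (A : ℕ → ℝ) (α Pc Pmax : ℝ)
    (hH1 : 0 < H 1) (hHe : 0 < He)
    (hchain : ∀ k, 1 ≤ k → k < K → H k ≤ H (k+1))
    (heM : He < H M)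
    (hA : ∀ k ∈ Icc 1 K, 1 ≤ A k)
    (hPmax : (∑ k ∈ Icc 1 K, (A k - 1) / H k * ∏ j ∈ Icc 1 (k-1), A j) ≤ Pmax) :
    letI θ : (ℕ → ℝ) → ℕ → ℝ := fun p k => ∑ i ∈ Icc k K, p i
    letI Pmin : ℝ := ∑ k ∈ Icc 1 K, (A k - 1) / H k * ∏ j ∈ Icc 1 (k-1), A j
    letI Ψ : (ℕ → ℝ) → ℝ := fun p =>
      (∑ k ∈ Icc M K,
        ((1/2) * Real.logb 2 (1 + H k * p k / (H k * θ p (k+1) + 1)) -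
         (1/2) * Real.logb 2 (1 + He * p k / (He * θ p (k+1) + 1))))
      - α * (θ p 1 + Pc)
    letI Feas : Set (ℕ → ℝ) := {p | (∀ i ∈ Icc 1 K, 0 ≤ p i) ∧ θ p 1 ≤ Pmax ∧
      ∀ k ∈ Icc 1 K, θ p k ≥ A k * θ p (k+1) + (A k - 1) / H k}
    letI u : ℝ := (Pmax - Pmin + (A K - 1) / H K * ∏ j ∈ Icc 1 (K-1), A j) /
      ∏ j ∈ Icc 1 (K-1), A j
    (∀ t ∈ Set.Icc ((A K - 1) / H K) u, powerAlloc K H A t ∈ Feas) ∧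
    (∃ Mv : ℝ, IsGreatest (Ψ '' Feas) Mv ∧
      IsGreatest ((fun t => Ψ (powerAlloc K H A t)) '' Set.Icc ((A K - 1) / H K) u) Mv) := by
  have hK : 1 ≤ K := hM1.trans hMK
  have hHmono : MonotoneOn H (Set.Icc 1 K) :=
    monotoneOn_of_le_add_one Set.ordConnected_Icc fun k _ hk hk1 => hchain k hk.1 hk1.2
  have hH : ∀ k ∈ Icc 1 K, 0 ≤ H k := fun k hk =>
    hH1.le.trans (hHmono ⟨le_rfl, hK⟩ (mem_Icc.1 hk) (mem_Icc.1 hk).1)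
  have hfeas : Set.MapsTo (powerAlloc K H A)
      (Set.Icc ((A K - 1) / H K) (maxStrongPower K H A Pmax)) (feasibleSet K H A Pmax) :=
    fun t ht => powerAlloc_mem_feasibleSet hK hH hA ht.1 ((tailPower_one_le_iff hK hA).2 ht.2)
  have hcu : (A K - 1) / H K ≤ maxStrongPower K H A Pmax :=
    (tailPower_one_le_iff hK hA).1 <| by
      rw [tailPower_one hK, sub_self, zero_mul, add_zero]
      exact hPmax
  have hc0 : 0 ≤ (A K - 1) / H K :=
    div_nonneg (sub_nonneg.2 (hA K (mem_Icc.2 ⟨hK, le_rfl⟩))) (hH K (mem_Icc.2 ⟨hK, le_rfl⟩))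
  obtain ⟨t₀, ht₀, hmax⟩ := isCompact_Icc.exists_isMaxOn (Set.nonempty_Icc.2 hcu)
    ((continuousOn_secrecyObjective_powerAlloc (α := α) (Pc := Pc) hM1 hMK hH hHe.le hA).mono
      fun t ht => hc0.trans ht.1)
  exact ⟨hfeas, _, isGreatest_image_of_forall_le_comp hfeas
    (fun p hp => exists_secrecyObjective_le_powerAlloc hM1 hMK hH hHmono hHe.le heM.le hA hp)
    ht₀ hmax⟩

open Finset in
/-- In the K-user NOMA system with eavesdropper gain H_e between users
M−1 and M, every power vector p(t) with t ∈ [(A_K − 1)/H_K, u] is feasible, and the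
maximum of the SEE objective Ψ over the feasible set Π is attained and equals the
maximum of t ↦ Ψ(p(t)) over [(A_K − 1)/H_K, u]. -/
theorem see_multiuser_reduction_to_one_dimension
    (K M : ℕ) (hK : 2 ≤ K) (hM1 : 1 ≤ M) (hMK : M ≤ K)
    (H : ℕ → ℝ) (He : ℝ) (A : ℕ → ℝ) (α Pc Pmax : ℝ)
    (hH1 : 0 < H 1) (hHe : 0 < He)
    (hchain : ∀ k, 1 ≤ k → k < K → H k ≤ H (k+1))
    (hMe : 2 ≤ M → H (M - 1) ≤ He)
    (heM : He < H M)
    (hA : ∀ k ∈ Icc 1 K, 1 ≤ A k)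
    (hα : 0 < α) (hPc : 0 ≤ Pc)
    (hPmax : (∑ k ∈ Icc 1 K, (A k - 1) / H k * ∏ j ∈ Icc 1 (k-1), A j) ≤ Pmax) :
    letI θ : (ℕ → ℝ) → ℕ → ℝ := fun p k => ∑ i ∈ Icc k K, p i
    letI Pmin : ℝ := ∑ k ∈ Icc 1 K, (A k - 1) / H k * ∏ j ∈ Icc 1 (k-1), A j
    letI Ψ : (ℕ → ℝ) → ℝ := fun p =>
      (∑ k ∈ Icc M K,
        ((1/2) * Real.logb 2 (1 + H k * p k / (H k * θ p (k+1) + 1)) -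
         (1/2) * Real.logb 2 (1 + He * p k / (He * θ p (k+1) + 1))))
      - α * (θ p 1 + Pc)
    letI Feas : Set (ℕ → ℝ) := {p | (∀ i ∈ Icc 1 K, 0 ≤ p i) ∧ θ p 1 ≤ Pmax ∧
      ∀ k ∈ Icc 1 K, θ p k ≥ A k * θ p (k+1) + (A k - 1) / H k}
    letI u : ℝ := (Pmax - Pmin + (A K - 1) / H K * ∏ j ∈ Icc 1 (K-1), A j) /
      ∏ j ∈ Icc 1 (K-1), A j
    (∀ t ∈ Set.Icc ((A K - 1) / H K) u, powerAlloc K H A t ∈ Feas) ∧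
    (∃ Mv : ℝ, IsGreatest (Ψ '' Feas) Mv ∧
      IsGreatest ((fun t => Ψ (powerAlloc K H A t)) '' Set.Icc ((A K - 1) / H K) u) Mv) :=
  see_multiuser_reduction_to_one_dimension_general K M hM1 hMK H He A α Pc Pmax hH1 hHe hchain heM
    hA hPmax
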